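/- If kΩ₀² + ε² > 0 (so ΔE = √(kΩ₀²+ε²) > 0 is real) and (k+1)Ω₀/2 + iε ≠ 0, then the eigenstate ψ± of H_rot is also an eigenstate of the antilinear PT operator PT(v) = σₓ · conj(v), with eigenvalue (±ΔE + i(k−1)Ω₀/2)/((k+1)Ω₀/2 + iε). -/

import Mathlib

open Matrix ComplexConjugate

-- The first component works because `conj z * z / w = |w|² / w = conj w`.
theorem swap_conj_eq_smul_of_normSq_eq {z w : ℂ} (hw : w ≠ 0)
    (h : Complex.normSq z = Complex.normSq w) :
    ![conj w, conj z] = (conj z / w) • ![z, w] := by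
  have hz : conj z * z = w * conj w := by
    rw [← Complex.normSq_eq_conj_mul_self, h, Complex.mul_conj]
  ext i
  fin_cases i
  · simp only [Fin.zero_eta, Fin.isValue, cons_val_zero, Pi.smul_apply, smul_eq_mul]
    rw [div_mul_eq_mul_div, hz, mul_div_cancel_left₀ _ hw]
  · simp only [Fin.mk_one, Fin.isValue, cons_val_one, cons_val_fin_one, Pi.smul_apply, smul_eq_mul]
    rw [div_mul_cancel₀ _ hw]

-- `((k+1)/2)² - ((k-1)/2)² = k`, so both sides reduce to `a² + ((k-1)/2 Ω₀)²`.
theorem normSq_eigencomponents_eq {ε Ω₀ k a : ℝ} (ha : a ^ 2 = k * Ω₀ ^ 2 + ε ^ 2) :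
    Complex.normSq ((a : ℂ) - Complex.I * (k - 1) / 2 * Ω₀) =
      Complex.normSq ((k + 1) / 2 * Ω₀ + Complex.I * ε) := by
  have h₁ : (a : ℂ) - Complex.I * (k - 1) / 2 * Ω₀ =
      (a : ℂ) + ((1 - k) / 2 * Ω₀ : ℝ) * Complex.I := by
    push_cast; ring
  have h₂ : ((k + 1) / 2 * Ω₀ : ℂ) + Complex.I * ε =
      ((k + 1) / 2 * Ω₀ : ℝ) + (ε : ℂ) * Complex.I := by
    push_cast; ring
  rw [h₁, h₂, Complex.normSq_add_mul_I, Complex.normSq_add_mul_I, ha]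
  ring

theorem lzsm_rot_pt_eigenstates (ε Ω₀ k : ℝ) (h : k * Ω₀^2 + ε^2 > 0)
    (hne : ((k+1)/2*Ω₀ : ℂ) + Complex.I*ε ≠ 0)
    (ΔE : ℝ) (hΔ : ΔE = Real.sqrt (k * Ω₀^2 + ε^2))
    (ψp ψm : Fin 2 → ℂ)
    (hp : ψp = ![(ΔE : ℂ) - Complex.I*(k-1)/2*Ω₀, (k+1)/2*Ω₀ + Complex.I*ε])
    (hm : ψm = ![(-ΔE : ℂ) - Complex.I*(k-1)/2*Ω₀, (k+1)/2*Ω₀ + Complex.I*ε]) :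
    ![(starRingEnd ℂ) (ψp 1), (starRingEnd ℂ) (ψp 0)]
      = (((ΔE : ℂ) + Complex.I*(k-1)/2*Ω₀)/((k+1)/2*Ω₀ + Complex.I*ε)) • ψp ∧
    ![(starRingEnd ℂ) (ψm 1), (starRingEnd ℂ) (ψm 0)]
      = (((-ΔE : ℂ) + Complex.I*(k-1)/2*Ω₀)/((k+1)/2*Ω₀ + Complex.I*ε)) • ψm := by
  have eigen : ∀ a : ℝ, a ^ 2 = k * Ω₀ ^ 2 + ε ^ 2 →
      ![conj ((k+1)/2*Ω₀ + Complex.I*ε), conj ((a : ℂ) - Complex.I*(k-1)/2*Ω₀)]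
        = (((a : ℂ) + Complex.I*(k-1)/2*Ω₀)/((k+1)/2*Ω₀ + Complex.I*ε)) •
          ![(a : ℂ) - Complex.I*(k-1)/2*Ω₀, (k+1)/2*Ω₀ + Complex.I*ε] := by
    intro a ha
    convert swap_conj_eq_smul_of_normSq_eq hne (normSq_eigencomponents_eq ha) using 3
    simp only [map_sub, map_mul, map_div₀, Complex.conj_ofReal, Complex.conj_I, map_one, map_ofNat]
    ring
  have hsq : ΔE ^ 2 = k * Ω₀ ^ 2 + ε ^ 2 := by rw [hΔ, Real.sq_sqrt h.le]
  subst hp hm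
  refine ⟨eigen ΔE hsq, ?_⟩
  simpa using eigen (-ΔE) (by rw [neg_sq, hsq])
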